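/- Let y₁, y₂ > 0 be real numbers satisfying 27·y₁⁴·y₂⁴ − 18·y₁²·y₂² + 4·y₁² + 4·y₂² = 1. Then y₁² ≤ 1/3 and y₂² ≤ 1/3; moreover, y₁² = 1/3 holds if and only if (y₁, y₂) = (1/√3, 1/√3), and likewise y₂² = 1/3 holds if and only if (y₁, y₂) = (1/√3, 1/√3). -/

import Mathlib

/-!
Put `a = y₁²`, `b = y₂²`. For fixed `a` the curve is a quadratic equation in `b` whose
discriminant `16 (1 - 3a)³` must be a square (complete the square), so
`a ≤ 1/3`. At `a = 1/3` the quadratic degenerates to `3 (b - 1/3)² = 0`, forcing `b = 1/3`.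
The curve is symmetric in `a` and `b`.
-/

namespace Caustic

def poly (a b : ℝ) : ℝ := 27 * a ^ 2 * b ^ 2 - 18 * a * b + 4 * a + 4 * b - 1

lemma poly_comm (a b : ℝ) : poly a b = poly b a := by
  unfold poly; ring

lemma sq_eq_discriminant {a b : ℝ} (h : poly a b = 0) :
    (54 * a ^ 2 * b + 4 - 18 * a) ^ 2 = 16 * (1 - 3 * a) ^ 3 := by
  unfold poly at h; linear_combination 108 * a ^ 2 * h

lemma le_one_third {a b : ℝ} (h : poly a b = 0) : a ≤ 1 / 3 := by
  have hcube : 0 ≤ (1 - 3 * a) ^ 3 := by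
    nlinarith [sq_eq_discriminant h, sq_nonneg (54 * a ^ 2 * b + 4 - 18 * a)]
  have : 0 ≤ 1 - 3 * a := (Odd.pow_nonneg_iff (by decide)).mp hcube
  linarith

lemma eq_one_third_of_poly_one_third {b : ℝ} (h : poly (1 / 3) b = 0) : b = 1 / 3 := by
  have : 3 * (b - 1 / 3) ^ 2 = 0 := by unfold poly at h; linear_combination h
  nlinarith [sq_nonneg (b - 1 / 3)]

end Caustic

lemma sq_eq_one_third_iff {y : ℝ} (hy : 0 < y) : y ^ 2 = 1 / 3 ↔ y = 1 / Real.sqrt 3 := by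
  rw [one_div (Real.sqrt 3), ← Real.sqrt_inv, eq_comm (a := y),
    Real.sqrt_eq_iff_eq_sq (by norm_num) hy.le, one_div, eq_comm]

theorem stmt_13 (y₁ y₂ : ℝ) (hy₁ : 0 < y₁) (hy₂ : 0 < y₂)
    (h : 27 * y₁^4 * y₂^4 - 18 * y₁^2 * y₂^2 + 4 * y₁^2 + 4 * y₂^2 = 1) :
    y₁^2 ≤ 1/3 ∧ y₂^2 ≤ 1/3 ∧
    (y₁^2 = 1/3 ↔ ((y₁, y₂) : ℝ × ℝ) = (1 / Real.sqrt 3, 1 / Real.sqrt 3)) ∧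
    (y₂^2 = 1/3 ↔ ((y₁, y₂) : ℝ × ℝ) = (1 / Real.sqrt 3, 1 / Real.sqrt 3)) := by
  have h₁₂ : Caustic.poly (y₁ ^ 2) (y₂ ^ 2) = 0 := by unfold Caustic.poly; linear_combination h
  have h₂₁ : Caustic.poly (y₂ ^ 2) (y₁ ^ 2) = 0 := Caustic.poly_comm _ _ ▸ h₁₂
  have hpoint : ((y₁, y₂) : ℝ × ℝ) = (1 / Real.sqrt 3, 1 / Real.sqrt 3) ↔
      y₁ ^ 2 = 1 / 3 ∧ y₂ ^ 2 = 1 / 3 := by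
    rw [Prod.mk.injEq, sq_eq_one_third_iff hy₁, sq_eq_one_third_iff hy₂]
  refine ⟨Caustic.le_one_third h₁₂, Caustic.le_one_third h₂₁, ?_, ?_⟩
  · rw [hpoint]
    exact ⟨fun ha => ⟨ha, Caustic.eq_one_third_of_poly_one_third (ha ▸ h₁₂)⟩, And.left⟩
  · rw [hpoint]
    exact ⟨fun hb => ⟨Caustic.eq_one_third_of_poly_one_third (hb ▸ h₂₁), hb⟩, And.right⟩
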